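/- Suppose there exists an insertion of (Θ, A) into Δ along x, and let ρ : Δ → Γ, τ : Θ → Γ and σ : Γ → Γ' be substitutions with ρ(x) = Coh Θ A τ. Then σ ∘ (ρ ≪_x τ) = (σ ∘ ρ) ≪_x (σ ∘ τ) as substitutions (Δ ≪_x Θ) → Γ'. -/

import Mathlib

namespace Catt

/-- The countably infinite set of variables. -/
abbrev V : Type := ℕ

-- raw syntax
mutual
inductive Ctx : Type
  | nil : Ctx
  | ext : Ctx → V → Ty → Ctx
inductive Sub : Type
  | nil : Sub
  | ext : Sub → V → Tm → Sub
inductive Ty : Type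
  | star : Ty
  | arr : Tm → Ty → Tm → Ty
inductive Tm : Type
  | var : V → Tm
  | coh : Ctx → Ty → Sub → Tm
end

def Ty.dim : Ty → ℕ
  | .star => 0
  | .arr _ A _ => A.dim + 1

def Ctx.dim : Ctx → ℕ
  | .nil => 0
  | .ext Γ _ A => max Γ.dim A.dim

def Ctx.lookup : Ctx → V → Ty
  | .nil, _ => .star
  | .ext Γ x A, y => if x = y then A else Γ.lookup y

def Ctx.vars : Ctx → List V
  | .nil => []
  | .ext Γ x _ => Γ.vars ++ [x]

def Ctx.varset (Γ : Ctx) : Finset V := Γ.vars.toFinset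

def Ctx.decls : Ctx → List (V × Ty)
  | .nil => []
  | .ext Γ x A => Γ.decls ++ [(x, A)]

def Sub.find : Sub → V → Tm
  | .nil, x => .var x
  | .ext σ y t, x => if y = x then t else σ.find x

def Sub.terms : Sub → List Tm
  | .nil => []
  | .ext σ _ t => σ.terms ++ [t]

-- substitution application and composition
mutual
def Tm.sub : Tm → Sub → Tm
  | .var x, σ => σ.find x
  | .coh Γ A τ, σ => .coh Γ A (Sub.comp τ σ)
def Ty.sub : Ty → Sub → Ty
  | .star, _ => .star
  | .arr s A t, σ => .arr (Tm.sub s σ) (Ty.sub A σ) (Tm.sub t σ)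
def Sub.comp : Sub → Sub → Sub
  | .nil, _ => .nil
  | .ext τ x t, σ => .ext (Sub.comp τ σ) x (Tm.sub t σ)
end

-- free variables
mutual
def Tm.fv : Tm → Finset V
  | .var x => {x}
  | .coh _ _ σ => Sub.fv σ
def Ty.fv : Ty → Finset V
  | .star => ∅
  | .arr s A t => Tm.fv s ∪ Ty.fv A ∪ Tm.fv t
def Sub.fv : Sub → Finset V
  | .nil => ∅
  | .ext σ _ t => Sub.fv σ ∪ Tm.fv t
end

/-- The support of a single variable in a context. -/
def Ctx.suppVar : Ctx → V → Finset V
  | .nil, v => {v}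
  | .ext Γ x A, v =>
      if x = v then insert x ((Ty.fv A).biUnion (fun w => Γ.suppVar w))
      else Γ.suppVar v

/-- The support of a set of variables in a context. -/
def suppOf (Γ : Ctx) (s : Finset V) : Finset V := s.biUnion (fun w => Γ.suppVar w)

end Catt
-- part 2 (appended to pre1 contents for testing)
namespace Catt

/-- `A^ε_m` : the m-dimensional source (ε = false) or target (ε = true) of a type. -/
def Ty.bdry (ε : Bool) (m : ℕ) : Ty → Tm
  | .star => .var 0
  | .arr s A t => if A.dim = m then (if ε then t else s) else Ty.bdry ε m A

def Tm.dim (Γ : Ctx) : Tm → ℕ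
  | .var x => (Γ.lookup x).dim
  | .coh _ A _ => A.dim

/-- `δ^ε_n` : the n-dimensional source/target of a term in a context. -/
def Tm.bdry (Γ : Ctx) (ε : Bool) (n : ℕ) (t : Tm) : Tm :=
  if Tm.dim Γ t = n then t
  else match t with
    | .var x => Ty.bdry ε n (Γ.lookup x)
    | .coh _ A σ => Tm.sub (Ty.bdry ε n A) σ

/-- codimension-1 source of a term. -/
def Tm.src (Γ : Ctx) (t : Tm) : Tm := Tm.bdry Γ false (Tm.dim Γ t - 1) t
/-- codimension-1 target of a term. -/
def Tm.tgt (Γ : Ctx) (t : Tm) : Tm := Tm.bdry Γ true (Tm.dim Γ t - 1) t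

def Tm.isVarb : Tm → Bool
  | .var _ => true
  | .coh _ _ _ => false

def Tm.isVarOf : Tm → V → Bool
  | .var y, x => y == x
  | .coh _ _ _, _ => false

def Ty.srcIs (x : V) : Ty → Bool
  | .arr s _ _ => s.isVarOf x
  | .star => false

def Ty.tgtIs (x : V) : Ty → Bool
  | .arr _ _ t => t.isVarOf x
  | .star => false

/-- The variable set of the boundary `∂^ε(Γ)` of a pasting context. -/
def Ctx.bdryVars (ε : Bool) (Γ : Ctx) : Finset V :=
  ((Γ.decls.filter fun p =>
      decide (p.2.dim + 1 < Γ.dim) ||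
      (decide (p.2.dim + 1 = Γ.dim) &&
        Γ.decls.all fun q => !(if ε then Ty.srcIs p.1 q.2 else Ty.tgtIs p.1 q.2))).map
    Prod.fst).toFinset

/-- The pasting context judgement `Γ ⊢_pd t : A`. -/
inductive Pd : Ctx → Tm → Ty → Prop
  | start (x : V) : Pd (.ext .nil x .star) (.var x) .star
  | up {Γ : Ctx} {x : Tm} {A : Ty} (y f : V) :
      Pd Γ x A → y ∉ Γ.varset → f ∉ Γ.varset → y ≠ f →
      Pd (.ext (.ext Γ y A) f (.arr x A (.var y))) (.var f) (.arr x A (.var y))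
  | down {Γ : Ctx} {f x y : Tm} {A : Ty} :
      Pd Γ f (.arr x A y) → Pd Γ y A

/-- `Γ ⊢_pd` : Γ is a pasting context. -/
def IsPd (Γ : Ctx) : Prop := ∃ x : Tm, Pd Γ x .star

-- a term/type contains no coherences
mutual
def Tm.noCoh : Tm → Prop
  | .var _ => True
  | .coh _ _ _ => False
def Ty.noCoh : Ty → Prop
  | .star => True
  | .arr s A t => Tm.noCoh s ∧ Ty.noCoh A ∧ Tm.noCoh t
end

/-- A globular context: one containing no coherences in its syntax tree. -/
def Ctx.globular : Ctx → Prop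
  | .nil => True
  | .ext Γ _ A => Ctx.globular Γ ∧ Ty.noCoh A

/-- The linear height of a type: the largest n such that all terms contained in it of
dimension below n are variables. -/
def Ty.lh : Ty → ℕ
  | .star => 0
  | .arr s A t => if A.lh = A.dim && s.isVarb && t.isVarb then A.dim + 1 else A.lh

end Catt
-- part 3: variable-labelled Batanin trees
namespace Catt

/-- Variable-labelled Batanin trees, in "alternating" form: `sing v` is the tree with
label list [v] and no branches; `branch v b r` is the tree whose first label is `v`,
whose first branch is `b` (sitting between `v` and the first label of `r`), and whose
remaining labels and branches are those of `r`. -/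
inductive LTree : Type
  | sing : V → LTree
  | branch : V → LTree → LTree → LTree

def LTree.firstLabel : LTree → V
  | .sing v => v
  | .branch v _ _ => v

def LTree.lastLabel : LTree → V
  | .sing v => v
  | .branch _ _ r => r.lastLabel

/-- The linear height of a tree. -/
def LTree.lh : LTree → ℕ
  | .sing _ => 0
  | .branch _ b (.sing _) => b.lh + 1
  | .branch _ _ (.branch _ _ _) => 0

/-- A tree is linear if every node has at most one branch. -/
def LTree.isLinear : LTree → Bool
  | .sing _ => true
  | .branch _ b (.sing _) => b.isLinear
  | .branch _ _ (.branch _ _ _) => false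

def LTree.height : LTree → ℕ
  | .sing _ => 0
  | .branch _ b r => max (b.height + 1) r.height

def LTree.allLabels : LTree → List V
  | .sing v => [v]
  | .branch v b r => v :: (b.allLabels ++ r.allLabels)

/-- A tree is well-labelled if all its labels are distinct. -/
def LTree.wellLabelled (T : LTree) : Prop := T.allLabels.Nodup

/-- The locally maximal variables of a tree: the labels of leaf nodes. -/
def LTree.locMax : LTree → List V
  | .sing v => [v]
  | .branch _ b (.sing _) => b.locMax
  | .branch _ b (.branch w b' r') => b.locMax ++ LTree.locMax (.branch w b' r')

/-- The topmost variable of a (linear) tree. -/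
def LTree.topVar : LTree → V
  | .sing v => v
  | .branch _ b _ => b.topVar

/-- The branching path of a (locally maximal) variable in a tree. -/
def LTree.bp (x : V) : LTree → List ℕ
  | .sing _ => [0]
  | .branch _ b r =>
      if x ∈ b.allLabels then (if b.isLinear then [0] else 0 :: b.bp x)
      else
        match r.bp x with
        | [] => []
        | n :: p => (n + 1) :: p

/-- graft T r : replace the trailing `sing` of `T` by the continuation of `r`. -/
def LTree.graft : LTree → LTree → LTree
  | .sing w, .sing _ => .sing w
  | .sing w, .branch _ b' r' => .branch w b' r'
  | .branch w b t, r => .branch w b (t.graft r)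

/-- Replace the first label of a tree. -/
def LTree.setHead : LTree → V → LTree
  | .sing _, w => .sing w
  | .branch _ b r, w => .branch w b r

/-- Insertion of the tree T into S along a path. -/
def LTree.ins : LTree → List ℕ → LTree → LTree
  | .sing v, _, _ => .sing v
  | .branch v b r, [], _ => .branch v b r
  | .branch _ _ r, [0], T => T.graft r
  | .branch v b r, 0 :: p, T =>
      match T with
      | .branch w0 T' rT => .branch w0 (b.ins p T') (r.setHead rT.firstLabel)
      | .sing _ => .branch v b r
  | .branch v b r, (n + 1) :: p, T => .branch v b (r.ins (n :: p) T)

-- the declarations of the pasting context of a tree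
mutual
def LTree.ctxD : Ty → LTree → List (V × Ty)
  | A, .sing v => [(v, A)]
  | A, .branch v b r => (v, A) :: LTree.ctxRest A (.var v) b r
  termination_by A T => sizeOf T
  decreasing_by all_goals (simp_wf; try omega)
def LTree.ctxRest : Ty → Tm → LTree → LTree → List (V × Ty)
  | A, prev, b, .sing w =>
      (w, A) :: LTree.ctxD (.arr prev A (.var w)) b
  | A, prev, b, .branch w b' r' =>
      ((w, A) :: LTree.ctxD (.arr prev A (.var w)) b) ++ LTree.ctxRest A (.var w) b' r'
  termination_by A prev b r => sizeOf b + sizeOf r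
  decreasing_by all_goals (simp_wf; try omega)
end

def Ctx.ofDecls (l : List (V × Ty)) : Ctx := l.foldl (fun Γ p => .ext Γ p.1 p.2) .nil

/-- `⌊T⌋` : the pasting context associated to a labelled Batanin tree. -/
def LTree.ctx (T : LTree) : Ctx := Ctx.ofDecls (LTree.ctxD .star T)

/-- The identity substitution of a context. -/
def Ctx.idSub : Ctx → Sub
  | .nil => .nil
  | .ext Γ x _ => .ext Γ.idSub x (.var x)

/-- ε-truncation of a tree at height k (tree-level boundary). -/
def LTree.trunc (ε : Bool) : ℕ → LTree → LTree
  | 0, T => .sing (if ε then T.lastLabel else T.firstLabel)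
  | _ + 1, .sing v => .sing v
  | k + 1, .branch v b r => .branch v (LTree.trunc ε k b) (LTree.trunc ε (k + 1) r)

-- unbiased terms and types of a tree, with fuel
mutual
def utmF : ℕ → LTree → Tm
  | 0, T => .var T.topVar
  | fuel + 1, T =>
      if T.isLinear then .var T.topVar
      else .coh T.ctx (utyF fuel T.height T) (Ctx.idSub T.ctx)
  termination_by fuel T => (fuel, 0)
def utyF : ℕ → ℕ → LTree → Ty
  | _, 0, _ => .star
  | fuel, k + 1, T =>
      .arr (utmF fuel (LTree.trunc false k T)) (utyF fuel k T)
        (utmF fuel (LTree.trunc true k T))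
  termination_by fuel k T => (fuel, k + 1)
end

/-- The unbiased term of a pasting context (given as a tree). -/
def LTree.utm (T : LTree) : Tm := utmF (T.height + 1) T
/-- The unbiased type of a pasting context (given as a tree). -/
def LTree.uty (T : LTree) : Ty := utyF (T.height + 1) T.height T

end Catt
-- part 4: insertion data, discs
namespace Catt

/-- The inserted tree `S ≪_x T`, inserting along the branching path of x. -/
def LTree.insTree (S : LTree) (x : V) (T : LTree) : LTree := S.ins (S.bp x) T

/-- The inserted pasting context `Δ ≪_x Θ`. -/
def insCtx (S : LTree) (x : V) (T : LTree) : Ctx := (S.insTree x T).ctx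

/-- Build a substitution from a function on a list of variables. -/
def mkSub (f : V → Tm) (l : List V) : Sub := l.foldl (fun σ v => .ext σ v (f v)) .nil

/-- The interior substitution `ι : Θ → Δ ≪_x Θ`, sending every variable to itself. -/
def iota (T : LTree) : Sub := Ctx.idSub T.ctx

/-- The exterior substitution `κ : Δ → Δ ≪_x Θ` determined by a type A over Θ. -/
def kappa (S : LTree) (x : V) (T : LTree) (A : Ty) : Sub :=
  let Δ : Ctx := S.ctx
  let I : Ctx := insCtx S x T
  let B : Ty := Δ.lookup x
  mkSub (fun y =>
    if y ∈ I.vars then .var y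
    else
      match (List.range B.dim).findSome? (fun n =>
        if (Ty.bdry false n B).isVarOf y then some (Tm.sub (Ty.bdry false n A) (iota T))
        else if (Ty.bdry true n B).isVarOf y then some (Tm.sub (Ty.bdry true n A) (iota T))
        else none) with
      | some t => t
      | none => .var y) Δ.vars

/-- The inserted substitution `σ ≪_x τ : (Δ ≪_x Θ) → Γ`. -/
def insSub (S : LTree) (x : V) (T : LTree) (σ τ : Sub) : Sub :=
  mkSub (fun v => if v ∈ (T.ctx).vars then τ.find v else σ.find v) (insCtx S x T).vars

/-- Encoding of the disc variables `d_n^ε`. -/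
def dvar (n : ℕ) (ε : Bool) : V := 2 * n + (if ε then 1 else 0)

/-- The type of the n-dimensional disc cells. -/
def discTy : ℕ → Ty
  | 0 => .star
  | n + 1 => .arr (.var (dvar n false)) (discTy n) (.var (dvar n true))

/-- The disc contexts `D_n`. -/
def disc : ℕ → Ctx
  | 0 => .ext .nil (dvar 0 false) .star
  | n + 1 => .ext (.ext (disc n) (dvar n true) (discTy n)) (dvar (n + 1) false) (discTy (n + 1))

/-- `t̄ : D_n → Γ`, the substitution classifying an n-dimensional term t. -/
def bar (Γ : Ctx) (t : Tm) : Sub :=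
  mkSub (fun v => Tm.bdry Γ (decide (v % 2 = 1)) (v / 2) t) (disc (Tm.dim Γ t)).vars

end Catt
-- part 5: the type theory Catt_sa : typing and definitional equality, mutually defined
namespace Catt

mutual

/-- Context validity `Γ ⊢` in Catt_sa. -/
inductive WfCtx : Ctx → Prop
  | nil : WfCtx .nil
  | ext {Γ : Ctx} {x : V} {A : Ty} :
      WfCtx Γ → x ∉ Γ.varset → WfTy Γ A → WfCtx (.ext Γ x A)

/-- Type validity `Γ ⊢ A` in Catt_sa. -/
inductive WfTy : Ctx → Ty → Prop
  | star {Γ : Ctx} : WfCtx Γ → WfTy Γ .star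
  | arr {Γ : Ctx} {s t : Tm} {A : Ty} :
      WfTy Γ A → WfTm Γ s A → WfTm Γ t A → WfTy Γ (.arr s A t)

/-- Substitution typing `Δ ⊢ σ : Γ` in Catt_sa. -/
inductive WfSub : Ctx → Sub → Ctx → Prop
  | nil {Δ : Ctx} : WfCtx Δ → WfSub Δ .nil .nil
  | ext {Δ : Ctx} {σ : Sub} {Γ : Ctx} {A : Ty} {t : Tm} {x : V} :
      WfSub Δ σ Γ → WfTy Γ A → WfTm Δ t (A.sub σ) → x ∉ Γ.varset →
      WfSub Δ (.ext σ x t) (.ext Γ x A)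

/-- Term typing `Γ ⊢ t : A` in Catt_sa: the rules (var'), (comp') and (coh'). -/
inductive WfTm : Ctx → Tm → Ty → Prop
  | var {Γ : Ctx} {x : V} {B : Ty} :
      WfCtx Γ → x ∈ Γ.varset → EqTy (Γ.lookup x) B → WfTm Γ (.var x) B
  | comp {Γ Δ : Ctx} {s t : Tm} {A B : Ty} {σ : Sub} :
      IsPd Γ → WfTy Γ (.arr s A t) → WfSub Δ σ Γ →
      suppOf Γ (Tm.fv s) = Ctx.bdryVars false Γ →
      suppOf Γ (Tm.fv t) = Ctx.bdryVars true Γ →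
      EqTy B (Ty.sub (.arr s A t) σ) →
      WfTm Δ (.coh Γ (.arr s A t) σ) B
  | coh {Γ Δ : Ctx} {A B : Ty} {σ : Sub} :
      IsPd Γ → WfTy Γ A → WfSub Δ σ Γ →
      suppOf Γ (Ty.fv A) = Γ.varset →
      EqTy B (A.sub σ) →
      WfTm Δ (.coh Γ A σ) B

/-- Definitional equality on contexts in Catt_sa. -/
inductive EqCtx : Ctx → Ctx → Prop
  | nil : EqCtx .nil .nil
  | ext {Γ Γ' : Ctx} {x : V} {A A' : Ty} :
      EqCtx Γ Γ' → EqTy A A' → EqCtx (.ext Γ x A) (.ext Γ' x A')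
  | symm {Γ Γ' : Ctx} : EqCtx Γ Γ' → EqCtx Γ' Γ
  | trans {Γ Γ' Γ'' : Ctx} : EqCtx Γ Γ' → EqCtx Γ' Γ'' → EqCtx Γ Γ''

/-- Definitional equality on types in Catt_sa. -/
inductive EqTy : Ty → Ty → Prop
  | star : EqTy .star .star
  | arr {A A' : Ty} {s s' t t' : Tm} :
      EqTy A A' → EqTm s s' → EqTm t t' → EqTy (.arr s A t) (.arr s' A' t')
  | symm {A A' : Ty} : EqTy A A' → EqTy A' A
  | trans {A A' A'' : Ty} : EqTy A A' → EqTy A' A'' → EqTy A A''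

/-- Definitional equality on substitutions in Catt_sa. -/
inductive EqSub : Sub → Sub → Prop
  | nil : EqSub .nil .nil
  | ext {σ σ' : Sub} {x : V} {t t' : Tm} :
      EqSub σ σ' → EqTm t t' → EqSub (.ext σ x t) (.ext σ' x t')
  | symm {σ σ' : Sub} : EqSub σ σ' → EqSub σ' σ
  | trans {σ σ' σ'' : Sub} : EqSub σ σ' → EqSub σ' σ'' → EqSub σ σ''

/-- Definitional equality on terms in Catt_sa: the smallest congruence generated by
the insertion equations. -/
inductive EqTm : Tm → Tm → Prop
  | var (x : V) : EqTm (.var x) (.var x)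
  | coh {Δ : Ctx} {A A' : Ty} {σ σ' : Sub} :
      EqTy A A' → EqSub σ σ' → EqTm (.coh Δ A σ) (.coh Δ A' σ')
  | symm {t t' : Tm} : EqTm t t' → EqTm t' t
  | trans {t t' t'' : Tm} : EqTm t t' → EqTm t' t'' → EqTm t t''
  | insert {S T : LTree} {x : V} {A : Ty} {σ τ : Sub} {Γ : Ctx} {B : Ty} :
      WfTm Γ (.coh S.ctx A σ) B →
      T.wellLabelled →
      x ∈ S.locMax →
      (S.bp x).length ≤ T.lh →
      EqTm (σ.find x) (.coh T.ctx T.uty τ) →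
      EqTm (.coh S.ctx A σ)
           (.coh (insCtx S x T) (A.sub (kappa S x T T.uty)) (insSub S x T σ τ))

end

/-- A substitution from a globular context respects the globular conditions. -/
def RespectsGlobular (Γ Δ : Ctx) (σ : Sub) : Prop :=
  ∀ (x : V) (s t : Tm) (A : Ty), (x, Ty.arr s A t) ∈ Γ.decls →
    EqTm (Tm.src Δ (σ.find x)) (s.sub σ) ∧ EqTm (Tm.tgt Δ (σ.find x)) (t.sub σ)

/-- A substitution from a globular context Γ to Δ is well-formed if it respects the
globular conditions and sends every variable of Γ to a term well typed in Δ. -/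
def WellFormedSub (Γ Δ : Ctx) (σ : Sub) : Prop :=
  RespectsGlobular Γ Δ σ ∧ ∀ x ∈ Γ.varset, ∃ B : Ty, WfTm Δ (σ.find x) B

def ValidTm (t : Tm) : Prop := ∃ (Γ : Ctx) (A : Ty), WfTm Γ t A
def ValidTy (A : Ty) : Prop := ∃ Γ : Ctx, WfTy Γ A
def ValidSub (σ : Sub) : Prop := ∃ (Γ Δ : Ctx), WfSub Γ σ Δ

end Catt
namespace Ordinal
universe u
noncomputable def nadd (a b : Ordinal.{u}) : Ordinal.{u} :=
  max (⨆ x : Set.Iio a, Order.succ (nadd x.1 b)) (⨆ x : Set.Iio b, Order.succ (nadd a x.1))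
termination_by (a, b)
decreasing_by
  · exact Prod.Lex.left _ _ x.2
  · exact Prod.Lex.right _ x.2
end Ordinal
namespace NaturalOps
scoped infixl:65 " ♯ " => Ordinal.nadd
end NaturalOps
-- part 6: reduction, syntactic depth, regular terms
namespace Catt

mutual

/-- Reduction on terms: insertion, cell reduction, argument reduction. -/
inductive RedTm : Tm → Tm → Prop
  | insert {S T : LTree} {x : V} {A : Ty} {σ τ : Sub} :
      T.wellLabelled →
      x ∈ S.locMax →
      (S.bp x).length ≤ T.lh →
      σ.find x = .coh T.ctx T.uty τ →
      RedTm (.coh S.ctx A σ)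
            (.coh (insCtx S x T) (A.sub (kappa S x T T.uty)) (insSub S x T σ τ))
  | cell {Δ : Ctx} {A A' : Ty} {σ : Sub} :
      RedTy A A' → RedTm (.coh Δ A σ) (.coh Δ A' σ)
  | arg {Δ : Ctx} {A : Ty} {σ σ' : Sub} :
      RedSub σ σ' → RedTm (.coh Δ A σ) (.coh Δ A σ')

/-- Reduction on types. -/
inductive RedTy : Ty → Ty → Prop
  | src {s s' t : Tm} {A : Ty} : RedTm s s' → RedTy (.arr s A t) (.arr s' A t)
  | tgt {s t t' : Tm} {A : Ty} : RedTm t t' → RedTy (.arr s A t) (.arr s A t')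
  | base {s t : Tm} {A A' : Ty} : RedTy A A' → RedTy (.arr s A t) (.arr s A' t)

/-- Reduction on substitutions. -/
inductive RedSub : Sub → Sub → Prop
  | here {σ : Sub} {x : V} {t t' : Tm} : RedTm t t' → RedSub (.ext σ x t) (.ext σ x t')
  | there {σ σ' : Sub} {x : V} {t : Tm} : RedSub σ σ' → RedSub (.ext σ x t) (.ext σ' x t)

end

/-- Reduction restricted to well-typed terms. -/
def RedTm' (s t : Tm) : Prop := RedTm s t ∧ ValidTm s ∧ ValidTm t
def RedTy' (A B : Ty) : Prop := RedTy A B ∧ ValidTy A ∧ ValidTy B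
def RedSub' (σ τ : Sub) : Prop := RedSub σ τ ∧ ValidSub σ ∧ ValidSub τ

/-- A term in normal form. -/
def NormalTm (t : Tm) : Prop := ∀ t' : Tm, ¬ RedTm t t'
def NormalTy (A : Ty) : Prop := ∀ A' : Ty, ¬ RedTy A A'
def NormalSub (σ : Sub) : Prop := ∀ σ' : Sub, ¬ RedSub σ σ'

open NaturalOps in
-- the syntactic depth of terms, types and substitutions
mutual
noncomputable def sdTm : Tm → Ordinal.{0}
  | .var _ => 0
  | .coh _ A σ => Ordinal.omega0 ^ (A.dim : Ordinal.{0}) ♯ sdTy A ♯ sdSub σ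
noncomputable def sdTy : Ty → Ordinal.{0}
  | .star => 0
  | .arr s A t => sdTm s ♯ sdTy A ♯ sdTm t
noncomputable def sdSub : Sub → Ordinal.{0}
  | .nil => 0
  | .ext σ _ t => sdSub σ ♯ sdTm t
end

/-- `Regular t h` : the term t is regular with regular height h. -/
inductive Regular : Tm → ℕ∞ → Prop
  | var (x : V) : Regular (.var x) ⊤
  | coh {S : LTree} {σ : Sub} (hgt : Tm → ℕ∞) :
      S.wellLabelled →
      S.isLinear = false →
      (∀ t ∈ σ.terms, Regular t (hgt t)) →
      (∀ x ∈ S.locMax, Regular (σ.find x) (hgt (σ.find x))) →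
      (∀ x ∈ S.locMax, ((S.bp x).length : ℕ∞) < hgt (σ.find x)) →
      Regular (.coh S.ctx S.uty σ) (S.lh : ℕ∞)

/-- Restriction of a context to a set of variables. -/
def Ctx.restrict : Ctx → Finset V → Ctx
  | .nil, _ => .nil
  | .ext Γ x A, s => if x ∈ s then .ext (Γ.restrict s) x A else Γ.restrict s

end Catt
namespace Catt

/-! Both sides are built entry by entry over the variables of `Δ ≪_x Θ`, and composing with `σ`
acts entrywise, so they agree as soon as every entry read off `ρ` or `τ` is an actual entry of it
(outside its domain `Sub.find` returns the variable itself, which `σ` would then move). This holds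
because a typed substitution has the variables of its source as domain, and every variable of
`Δ ≪_x Θ` not coming from `Θ` is a label of the tree of `Δ`. -/

def Sub.dom : Sub → List V
  | .nil => []
  | .ext σ x _ => σ.dom ++ [x]

theorem Sub.find_comp (σ : Sub) : ∀ {ρ : Sub} {v : V}, v ∈ ρ.dom →
    (ρ.comp σ).find v = (ρ.find v).sub σ
  | .nil, _, hv => by simp [Sub.dom] at hv
  | .ext ρ y t, v, hv => by
    simp only [Sub.comp, Sub.find]
    split_ifs with hy
    · rfl
    · simp only [Sub.dom, List.mem_append, List.mem_singleton] at hv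
      exact Sub.find_comp σ (hv.resolve_right fun h => hy h.symm)

theorem WfSub.dom_eq_vars : ∀ {Γ Δ : Ctx} {ρ : Sub}, WfSub Γ ρ Δ → ρ.dom = Δ.vars
  | _, _, _, .nil _ => rfl
  | _, _, _, .ext h _ _ _ => by simp [Sub.dom, Ctx.vars, h.dom_eq_vars]

theorem foldl_ext_comp (f : V → Tm) (σ : Sub) (l : List V) (acc : Sub) :
    (l.foldl (fun s v => .ext s v (f v)) acc).comp σ
      = l.foldl (fun s v => .ext s v ((f v).sub σ)) (acc.comp σ) := by
  induction l generalizing acc with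
  | nil => rfl
  | cons a l ih => exact ih _

theorem mkSub_comp (f : V → Tm) (l : List V) (σ : Sub) :
    (mkSub f l).comp σ = mkSub (fun v => (f v).sub σ) l :=
  foldl_ext_comp f σ l .nil

theorem mkSub_congr {f g : V → Tm} {l : List V} (h : ∀ v ∈ l, f v = g v) :
    mkSub f l = mkSub g l := by
  unfold mkSub
  generalize Sub.nil = acc
  induction l generalizing acc with
  | nil => rfl
  | cons a l ih =>
    simp only [List.foldl_cons, h a List.mem_cons_self]
    exact ih (fun v hv => h v (List.mem_cons_of_mem a hv)) _

theorem Ctx.vars_foldl_ext (l : List (V × Ty)) (Γ : Ctx) :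
    (l.foldl (fun Γ p => .ext Γ p.1 p.2) Γ).vars = Γ.vars ++ l.map Prod.fst := by
  induction l generalizing Γ with
  | nil => simp
  | cons a l ih => simp [ih, Ctx.vars]

theorem Ctx.vars_ofDecls (l : List (V × Ty)) : (Ctx.ofDecls l).vars = l.map Prod.fst :=
  Ctx.vars_foldl_ext l .nil

mutual
theorem LTree.mem_ctxD_iff (A : Ty) (T : LTree) (v : V) :
    v ∈ (T.ctxD A).map Prod.fst ↔ v ∈ T.allLabels := by
  match T with
  | .sing w => simp [LTree.ctxD, LTree.allLabels]
  | .branch w b r =>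
    simp only [LTree.ctxD, LTree.allLabels, List.map_cons, List.mem_cons,
      LTree.mem_ctxRest_iff A (.var w) b r v]
  termination_by sizeOf T
  decreasing_by all_goals (simp_wf; try omega)

theorem LTree.mem_ctxRest_iff (A : Ty) (prev : Tm) (b r : LTree) (v : V) :
    v ∈ (LTree.ctxRest A prev b r).map Prod.fst ↔ v ∈ b.allLabels ++ r.allLabels := by
  match r with
  | .sing w =>
    simp only [LTree.ctxRest, LTree.allLabels, List.map_cons, List.mem_cons, List.mem_append,
      LTree.mem_ctxD_iff _ b v]
    tauto
  | .branch w b' r' =>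
    simp only [LTree.ctxRest, LTree.allLabels, List.map_append, List.map_cons, List.mem_append,
      List.mem_cons, LTree.mem_ctxD_iff _ b v, LTree.mem_ctxRest_iff A (.var w) b' r' v]
    tauto
  termination_by sizeOf b + sizeOf r
  decreasing_by all_goals (simp_wf; try omega)
end

theorem LTree.mem_ctx_vars_iff (T : LTree) (v : V) : v ∈ T.ctx.vars ↔ v ∈ T.allLabels := by
  rw [LTree.ctx, Ctx.vars_ofDecls]
  exact LTree.mem_ctxD_iff .star T v

theorem LTree.firstLabel_mem_allLabels (T : LTree) : T.firstLabel ∈ T.allLabels := by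
  cases T <;> simp [LTree.firstLabel, LTree.allLabels]

theorem LTree.mem_allLabels_of_mem_setHead {r : LTree} {w v : V}
    (h : v ∈ (r.setHead w).allLabels) : v = w ∨ v ∈ r.allLabels := by
  cases r <;> grind [LTree.setHead, LTree.allLabels]

theorem LTree.mem_allLabels_of_mem_graft {T r : LTree} {v : V}
    (h : v ∈ (T.graft r).allLabels) : v ∈ T.allLabels ∨ v ∈ r.allLabels := by
  induction T generalizing r with
  | sing w => cases r <;> grind [LTree.graft, LTree.allLabels]
  | branch w b t _ ih => grind [LTree.graft, LTree.allLabels]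

theorem LTree.mem_allLabels_of_mem_ins {S T : LTree} {p : List ℕ} {v : V}
    (h : v ∈ (S.ins p T).allLabels) : v ∈ S.allLabels ∨ v ∈ T.allLabels := by
  induction S, p, T using LTree.ins.induct generalizing v with
  | case1 | case2 | case5 => simp_all [LTree.ins]
  | case3 w b r T =>
    have := LTree.mem_allLabels_of_mem_graft (by simpa only [LTree.ins] using h)
    grind [LTree.allLabels]
  | case4 w b r p _ w0 T' rT ih =>
    have := rT.firstLabel_mem_allLabels
    grind [LTree.ins, LTree.allLabels, LTree.mem_allLabels_of_mem_setHead]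
  | case6 w b r n p T ih => grind [LTree.ins, LTree.allLabels]

theorem mem_ctx_vars_of_mem_insCtx_vars {S T : LTree} {x v : V}
    (hv : v ∈ (insCtx S x T).vars) (hvT : v ∉ T.ctx.vars) : v ∈ S.ctx.vars := by
  rw [insCtx, LTree.mem_ctx_vars_iff] at hv
  rw [LTree.mem_ctx_vars_iff] at hvT ⊢
  exact (LTree.mem_allLabels_of_mem_ins hv).resolve_right hvT

/-- if an insertion of (Θ, A) into Δ along x exists, and
ρ : Δ → Γ, τ : Θ → Γ, σ : Γ → Γ' are substitutions with ρ(x) = Coh Θ A τ, then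
σ ∘ (ρ ≪_x τ) = (σ ∘ ρ) ≪_x (σ ∘ τ). -/
theorem comp_inserted_sub (S T : LTree) (x : V) (A : Ty) (Γ Γ' : Ctx) (ρ τ σ : Sub)
    (hS : S.wellLabelled) (hT : T.wellLabelled)
    (hx : x ∈ S.locMax)
    (hdim : A.dim = (S.ctx.lookup x).dim)
    (hA : WfTy T.ctx A)
    (hAlh : (S.bp x).length - 1 ≤ A.lh)
    (hTlh : (S.bp x).length - 1 ≤ T.lh)
    (hρ : WfSub Γ ρ S.ctx) (hτ : WfSub Γ τ T.ctx) (hσ : WfSub Γ' σ Γ)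
    (hρx : ρ.find x = .coh T.ctx A τ) :
    Sub.comp (insSub S x T ρ τ) σ = insSub S x T (Sub.comp ρ σ) (Sub.comp τ σ) := by
  rw [insSub, insSub, mkSub_comp]
  refine mkSub_congr fun v hv => ?_
  split_ifs with hvT
  · exact (σ.find_comp (hτ.dom_eq_vars ▸ hvT)).symm
  · exact (σ.find_comp (hρ.dom_eq_vars ▸ mem_ctx_vars_of_mem_insCtx_vars hv hvT)).symm

end Catt
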